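/- arXiv:1305.4026 — 2 statements merged into one kernel-verified Lean document; each statement's English description precedes it below -/
import Mathlib

section
/- Dito's lemma: Let U ⊆ ℝ^d be open, ψ : Pol(U) → C^∞(U) a ℂ-linear map on polynomials with ψ(1) = 0 and ψ(x^α) = 0 for all α, and let φ : C^∞(U) × C^∞(U) → C^∞(U) be a bidifferential operator (of finite order) vanishing on constants. If [ψ, x^α](f) = φ(x^α, f) for all polynomials f and all α (where [ψ, x^α](f) = ψ(x^α f) − x^α ψ(f)), then there exists exactly one differential operator η on U with ψ = η restricted to polynomials. -/
open Complex

/-- Partial derivative in direction `μ` of a complex-valued function on `ℝ^d`. -/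
noncomputable def pd {d : ℕ} (μ : Fin d) (f : (Fin d → ℝ) → ℂ) : (Fin d → ℝ) → ℂ :=
  fun x => fderiv ℝ f x (Pi.single μ 1)

/-- Iterated partial derivatives along a list of indices. -/
noncomputable def pds {d : ℕ} (L : List (Fin d)) (f : (Fin d → ℝ) → ℂ) : (Fin d → ℝ) → ℂ :=
  L.foldr pd f

/-- The coordinate function `x^α`. -/
def coordFn {d : ℕ} (α : Fin d) : (Fin d → ℝ) → ℂ := fun x => (x α : ℂ)

/-- The `ħ^k`-coefficient of the Moyal product
`f ⋆_M g = Σ_k (1/k!)(iħ/2)^k P^{μ₁ν₁}⋯P^{μₖνₖ} (∂_{μ₁}⋯∂_{μₖ}f)(∂_{ν₁}⋯∂_{νₖ}g)`. -/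
noncomputable def moyalCoeff {d : ℕ} (P : Fin d → Fin d → ℂ) (k : ℕ)
    (f g : (Fin d → ℝ) → ℂ) : (Fin d → ℝ) → ℂ :=
  ((k.factorial : ℂ)⁻¹ * (Complex.I / 2) ^ k) •
    ∑ μ : Fin k → Fin d, ∑ ν : Fin k → Fin d,
      (∏ i, P (μ i) (ν i)) • (pds (List.ofFn μ) f * pds (List.ofFn ν) g)

/-- Iterated partial derivative `∂_{x^I}` associated with a multi-index `I`. -/
noncomputable def pdsM {d : ℕ} (I : Fin d →₀ ℕ) (f : (Fin d → ℝ) → ℂ) : (Fin d → ℝ) → ℂ :=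
  pds (Finsupp.toMultiset I).toList f

/-- A differential operator on an open set `U ⊆ ℝ^d`:
`η(f) = Σ_I η^I ∂_{x^I} f` with smooth coefficients on `U`, only finitely many
of them nonzero. -/
structure DiffOpOn (d : ℕ) (U : Set (Fin d → ℝ)) where
  coeff : (Fin d →₀ ℕ) → ((Fin d → ℝ) → ℂ)
  finite : {I | coeff I ≠ 0}.Finite
  smooth : ∀ I, ContDiffOn ℝ (⊤ : ℕ∞) (coeff I) U

noncomputable def DiffOpOn.apply {d : ℕ} {U : Set (Fin d → ℝ)} (η : DiffOpOn d U)
    (f : (Fin d → ℝ) → ℂ) : (Fin d → ℝ) → ℂ :=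
  fun x => ∑ᶠ I, η.coeff I x * pdsM I f x

/-- A bidifferential operator on an open set `U ⊆ ℝ^d`:
`φ(f,g) = Σ_{I,J} φ^{I,J} ∂_{x^I} f ∂_{x^J} g` with smooth coefficients on `U`,
only finitely many of them nonzero. -/
structure BiDiffOpOn (d : ℕ) (U : Set (Fin d → ℝ)) where
  coeff : (Fin d →₀ ℕ) × (Fin d →₀ ℕ) → ((Fin d → ℝ) → ℂ)
  finite : {p | coeff p ≠ 0}.Finite
  smooth : ∀ p, ContDiffOn ℝ (⊤ : ℕ∞) (coeff p) U

noncomputable def BiDiffOpOn.apply {d : ℕ} {U : Set (Fin d → ℝ)} (φ : BiDiffOpOn d U)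
    (f g : (Fin d → ℝ) → ℂ) : (Fin d → ℝ) → ℂ :=
  fun x => ∑ᶠ p : (Fin d →₀ ℕ) × (Fin d →₀ ℕ),
    φ.coeff p x * pdsM p.1 f x * pdsM p.2 g x

/-- Evaluation of a polynomial in `d` variables as a function on `ℝ^d`. -/
noncomputable def polyEval {d : ℕ} (p : MvPolynomial (Fin d) ℂ) : (Fin d → ℝ) → ℂ :=
  fun x => MvPolynomial.eval (fun i => (x i : ℂ)) p

open MvPolynomial

namespace DitoAux
variable {d : ℕ}

noncomputable def pderivL (L : List (Fin d)) (p : MvPolynomial (Fin d) ℂ) : MvPolynomial (Fin d) ℂ :=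
  L.foldr (fun μ q => pderiv μ q) p

@[simp] lemma pderivL_nil (p : MvPolynomial (Fin d) ℂ) : pderivL [] p = p := rfl
@[simp] lemma pderivL_cons (μ : Fin d) (L : List (Fin d)) (p : MvPolynomial (Fin d) ℂ) :
    pderivL (μ :: L) p = pderiv μ (pderivL L p) := rfl

lemma pderiv_commute (μ ν : Fin d) (p : MvPolynomial (Fin d) ℂ) :
    pderiv μ (pderiv ν p) = pderiv ν (pderiv μ p) := by
  induction p using MvPolynomial.induction_on with
  | C a => simp
  | add p q hp hq => simp [hp, hq]
  | mul_X p i hp =>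
    simp only [pderiv_mul, pderiv_X, map_add, hp]
    rcases eq_or_ne μ i with rfl | hμ
    · rcases eq_or_ne ν μ with rfl | hν
      · ring
      · simp [Pi.single_apply, hν]
    · rcases eq_or_ne ν i with rfl | hν
      · simp [Pi.single_apply, hμ]
      · simp [Pi.single_apply, hμ, hν]

lemma pderivL_perm {L₁ L₂ : List (Fin d)} (h : L₁.Perm L₂) (p : MvPolynomial (Fin d) ℂ) :
    pderivL L₁ p = pderivL L₂ p := by
  induction h generalizing p with
  | nil => rfl
  | cons a h ih => simp [ih]
  | swap a b l => simp [pderiv_commute]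
  | trans h1 h2 ih1 ih2 => rw [ih1, ih2]

lemma pderivL_add (L : List (Fin d)) (p q : MvPolynomial (Fin d) ℂ) :
    pderivL L (p + q) = pderivL L p + pderivL L q := by
  induction L with
  | nil => rfl
  | cons μ L ih => simp [ih]

lemma pderivL_X_mul (α : Fin d) (L : List (Fin d)) (q : MvPolynomial (Fin d) ℂ) :
    pderivL L (X α * q)
      = X α * pderivL L q + (L.count α) • pderivL (L.erase α) q := by
  induction L generalizing q with
  | nil => simp
  | cons μ L ih =>
    rcases eq_or_ne μ α with rfl | hμ
    · simp only [pderivL_cons, ih, map_add, pderiv_mul, pderiv_X_self,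
        List.count_cons_self, List.erase_cons_head, map_nsmul]
      by_cases hmem : μ ∈ L
      · have h1 : pderiv μ (pderivL (L.erase μ) q) = pderivL L q := by
          have := (pderivL_perm (List.perm_cons_erase hmem) q).symm
          simpa using this
        rw [h1, add_smul, one_smul]
        push_cast
        ring
      · rw [List.count_eq_zero_of_not_mem hmem]
        simp only [zero_smul, zero_add, one_smul, add_zero, one_mul]
        ring
    · rw [List.erase_cons_tail (by simpa using hμ)]
      simp only [pderivL_cons, ih, map_add, pderiv_mul, pderiv_X, map_nsmul,
        List.count_cons_of_ne hμ]
      rw [Pi.single_eq_of_ne (Ne.symm hμ)]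
      ring

end DitoAux

namespace DitoAux2
open DitoAux
variable {d : ℕ}

/-- `Pa a J = ∏ i (X i - a i)^(J i)`. -/
noncomputable def Pa (a : Fin d → ℂ) (J : Fin d →₀ ℕ) : MvPolynomial (Fin d) ℂ :=
  ∏ i : Fin d, (X i - C (a i)) ^ (J i)

lemma pderiv_prod_eq_zero (μ : Fin d) (a : Fin d → ℂ) (e : Fin d → ℕ) (s : Finset (Fin d))
    (hμ : μ ∉ s) : pderiv μ (∏ i ∈ s, (X i - C (a i)) ^ (e i)) = 0 := by
  induction s using Finset.induction_on with
  | empty => simp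
  | insert j s hni ih =>
    rw [Finset.prod_insert hni, pderiv_mul, ih (fun h => hμ (Finset.mem_insert_of_mem h)),
      pderiv_pow]
    have hj : μ ≠ j := fun h => hμ (h ▸ Finset.mem_insert_self j s)
    have : pderiv μ (X j - C (a j)) = 0 := by
      rw [map_sub, pderiv_X, pderiv_C, Pi.single_eq_of_ne (Ne.symm hj)]
      simp
    simp [this]

lemma pderiv_Pa (μ : Fin d) (a : Fin d → ℂ) (J : Fin d →₀ ℕ) :
    pderiv μ (Pa a J) = (J μ) • Pa a (J - Finsupp.single μ 1) := by
  classical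
  have hsplit : Pa a J
      = (X μ - C (a μ)) ^ (J μ) * ∏ i ∈ Finset.univ.erase μ, (X i - C (a i)) ^ (J i) :=
    (Finset.mul_prod_erase Finset.univ _ (Finset.mem_univ μ)).symm
  have hR : pderiv μ (∏ i ∈ Finset.univ.erase μ, (X i - C (a i)) ^ (J i)) = 0 :=
    pderiv_prod_eq_zero μ a _ _ (Finset.notMem_erase μ _)
  have hXμ : pderiv μ (X μ - C (a μ)) = (1 : MvPolynomial (Fin d) ℂ) := by
    rw [map_sub, pderiv_X_self, pderiv_C, sub_zero]
  have hsplit' : Pa a (J - Finsupp.single μ 1)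
      = (X μ - C (a μ)) ^ (J μ - 1) * ∏ i ∈ Finset.univ.erase μ, (X i - C (a i)) ^ (J i) := by
    rw [Pa, ← Finset.mul_prod_erase Finset.univ _ (Finset.mem_univ μ)]
    congr 1
    · congr 1
      simp [Finsupp.single_eq_same]
    · exact Finset.prod_congr rfl (fun i hi => by
        rw [Finsupp.tsub_apply, Finsupp.single_apply, if_neg (Finset.ne_of_mem_erase hi).symm]
        simp)
  rw [hsplit, pderiv_mul, hR, mul_zero, add_zero, pderiv_pow, hXμ, mul_one, hsplit']
  rw [nsmul_eq_mul]
  ring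

/-- multiset of a list, as a finsupp -/
noncomputable def mL (L : List (Fin d)) : Fin d →₀ ℕ := Multiset.toFinsupp (↑L)

@[simp] lemma mL_nil : mL ([] : List (Fin d)) = 0 := by
  simp [mL]

@[simp] lemma mL_apply (L : List (Fin d)) (i : Fin d) : mL L i = L.count i := by
  classical
  simp [mL, Multiset.toFinsupp_apply]

lemma mL_cons (μ : Fin d) (L : List (Fin d)) : mL (μ :: L) = mL L + Finsupp.single μ 1 := by
  classical
  ext i
  rw [Finsupp.add_apply, mL_apply, mL_apply, List.count_cons, Finsupp.single_apply]
  rcases eq_or_ne i μ with rfl | h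
  · simp
  · simp [h, Ne.symm h]

lemma desc_step (J m : Fin d →₀ ℕ) (μ : Fin d) :
    (∏ i : Fin d, (J i).descFactorial (m i + Finsupp.single μ 1 i))
      = (J μ - m μ) * ∏ i : Fin d, (J i).descFactorial (m i) := by
  classical
  rw [← Finset.mul_prod_erase Finset.univ
      (fun i => (J i).descFactorial (m i + Finsupp.single μ 1 i)) (Finset.mem_univ μ),
    ← Finset.mul_prod_erase Finset.univ
      (fun i => (J i).descFactorial (m i)) (Finset.mem_univ μ)]
  have h2 : ∀ i ∈ Finset.univ.erase μ,
      (J i).descFactorial (m i + Finsupp.single μ 1 i) = (J i).descFactorial (m i) := by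
    intro i hi
    rw [Finsupp.single_apply,
      if_neg (Ne.symm (Finset.ne_of_mem_erase hi)), add_zero]
  rw [Finset.prod_congr rfl h2, Finsupp.single_eq_same, Nat.descFactorial_succ]
  ring

lemma pderivL_Pa (a : Fin d → ℂ) (L : List (Fin d)) (J : Fin d →₀ ℕ) :
    pderivL L (Pa a J)
      = (∏ i : Fin d, (J i).descFactorial (mL L i)) • Pa a (J - mL L) := by
  classical
  induction L with
  | nil => simp
  | cons μ L ih =>
    rw [pderivL_cons, ih, map_nsmul, pderiv_Pa, smul_smul, mL_cons]
    simp only [Finsupp.add_apply]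
    rw [desc_step, tsub_add_eq_tsub_tsub]
    congr 1
    rw [Finsupp.tsub_apply]
    ring

@[simp] lemma mL_toList (J : Fin d →₀ ℕ) : mL (Finsupp.toMultiset J).toList = J := by
  classical
  rw [mL, Multiset.coe_toList, Finsupp.toMultiset_toFinsupp]

lemma eval_Pa (a : Fin d → ℂ) (J : Fin d →₀ ℕ) :
    eval a (Pa a J) = if J = 0 then 1 else 0 := by
  classical
  rw [Pa, map_prod]
  rcases eq_or_ne J 0 with rfl | h
  · simp
  · rw [if_neg h]
    obtain ⟨i, hi⟩ : ∃ i, J i ≠ 0 := by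
      by_contra hc
      push_neg at hc
      exact h (Finsupp.ext hc)
    refine Finset.prod_eq_zero (Finset.mem_univ i) ?_
    rw [map_pow, map_sub, eval_X, eval_C, sub_self]
    exact zero_pow hi

lemma eval_pderivL_Pa (a : Fin d → ℂ) (J' J : Fin d →₀ ℕ) :
    eval a (pderivL (Finsupp.toMultiset J').toList (Pa a J))
      = if J' = J then ((∏ i : Fin d, (J i).factorial : ℕ) : ℂ) else 0 := by
  classical
  rw [pderivL_Pa, map_nsmul, eval_Pa, mL_toList]
  rcases eq_or_ne J' J with rfl | h
  · rw [if_pos rfl, if_pos (tsub_self J')]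
    simp [Nat.descFactorial_self, nsmul_eq_mul]
  · rw [if_neg h]
    by_cases hle : J' ≤ J
    · have hsub : J - J' ≠ 0 := by
        intro hc
        exact h (le_antisymm hle (tsub_eq_zero_iff_le.mp hc))
      rw [if_neg hsub]
      simp
    · obtain ⟨i, hi⟩ : ∃ i, J i < J' i := by
        by_contra hc
        push_neg at hc
        exact hle (Finsupp.le_def.mpr hc)
      have : (J i).descFactorial (J' i) = 0 := Nat.descFactorial_eq_zero_iff_lt.mpr hi
      have hprod : (∏ i : Fin d, (J i).descFactorial (J' i)) = 0 :=
        Finset.prod_eq_zero (Finset.mem_univ i) this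
      rw [hprod]
      simp

lemma pderivL_C (L : List (Fin d)) (c : ℂ) :
    pderivL L (C c) = if L = [] then C c else 0 := by
  induction L with
  | nil => rfl
  | cons μ L ih =>
    rw [pderivL_cons, ih]
    by_cases h : L = [] <;> simp [h]

lemma pderivL_X (L : List (Fin d)) (α : Fin d) :
    pderivL L (X α : MvPolynomial (Fin d) ℂ)
      = if L = [] then X α else if L = [α] then 1 else 0 := by
  classical
  induction L with
  | nil => rfl
  | cons μ L ih =>
    rw [pderivL_cons, ih]
    by_cases h : L = []
    · subst h
      rcases eq_or_ne μ α with rfl | hμ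
      · simp [pderiv_X]
      · have hne : ([μ] : List (Fin d)) ≠ [α] := by simp [hμ]
        simp [pderiv_X, Pi.single_apply, hμ, Ne.symm hμ, hne]
    · rw [if_neg h]
      by_cases h2 : L = [α]
      · subst h2
        rw [if_pos rfl]
        have h1 : (1 : MvPolynomial (Fin d) ℂ) = C 1 := (C_1).symm
        rw [h1, pderiv_C, if_neg (by simp : (μ :: [α] : List (Fin d)) ≠ []),
          if_neg (by simp : (μ :: [α] : List (Fin d)) ≠ [α])]
      · rw [if_neg h2]
        have hne : (μ :: L) ≠ [α] := by
          intro hc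
          apply h
          have := congrArg List.tail hc
          simpa using this
        rw [map_zero, if_neg (by simp : (μ :: L : List (Fin d)) ≠ []), if_neg hne]

lemma toMultiset_sub_single (K : Fin d →₀ ℕ) (α : Fin d) (h : K α ≠ 0) :
    Finsupp.toMultiset (K - Finsupp.single α 1) = (Finsupp.toMultiset K).erase α := by
  classical
  ext i
  rw [Finsupp.count_toMultiset]
  rcases eq_or_ne i α with rfl | hi
  · rw [Multiset.count_erase_self, Finsupp.count_toMultiset, Finsupp.tsub_apply,
      Finsupp.single_eq_same]
  · rw [Multiset.count_erase_of_ne hi, Finsupp.count_toMultiset, Finsupp.tsub_apply,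
      Finsupp.single_apply, if_neg (Ne.symm hi), tsub_zero]

lemma toList_count (K : Fin d →₀ ℕ) (α : Fin d) :
    ((Finsupp.toMultiset K).toList).count α = K α := by
  classical
  have h := Finsupp.count_toMultiset K α
  rw [← Multiset.coe_toList (Finsupp.toMultiset K), Multiset.coe_count] at h
  exact h

/-- canonical-list Leibniz rule -/
lemma pderivL_canon_X_mul (α : Fin d) (K : Fin d →₀ ℕ) (q : MvPolynomial (Fin d) ℂ) :
    pderivL (Finsupp.toMultiset K).toList (X α * q)
      = X α * pderivL (Finsupp.toMultiset K).toList q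
        + (K α) • pderivL (Finsupp.toMultiset (K - Finsupp.single α 1)).toList q := by
  classical
  rw [pderivL_X_mul, toList_count]
  rcases eq_or_ne (K α) 0 with h0 | h0
  · rw [h0, zero_smul, zero_smul]
  · congr 2
    apply pderivL_perm
    rw [← Multiset.coe_eq_coe, ← Multiset.coe_erase, Multiset.coe_toList, Multiset.coe_toList,
      toMultiset_sub_single K α h0]

lemma prod_factorial_split (K : Fin d →₀ ℕ) (α : Fin d) (h : K α ≠ 0) :
    (∏ i : Fin d, (K i).factorial)
      = K α * ∏ i : Fin d, (K i - Finsupp.single α 1 i).factorial := by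
  classical
  rw [← Finset.mul_prod_erase Finset.univ (fun i => (K i).factorial) (Finset.mem_univ α),
    ← Finset.mul_prod_erase Finset.univ
      (fun i => (K i - Finsupp.single α 1 i).factorial) (Finset.mem_univ α)]
  have h2 : ∀ i ∈ Finset.univ.erase α,
      (K i - Finsupp.single α 1 i).factorial = (K i).factorial := by
    intro i hi
    rw [Finsupp.single_apply,
      if_neg (Ne.symm (Finset.ne_of_mem_erase hi)), tsub_zero]
  rw [Finset.prod_congr rfl h2, Finsupp.single_eq_same, ← mul_assoc,
    Nat.mul_factorial_pred h]

lemma toList_eq_nil_iff (I : Fin d →₀ ℕ) :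
    (Finsupp.toMultiset I).toList = [] ↔ I = 0 := by
  classical
  rw [Multiset.toList_eq_nil]
  constructor
  · intro h
    have := congrArg Multiset.toFinsupp h
    rwa [Finsupp.toMultiset_toFinsupp, map_zero] at this
  · rintro rfl
    exact Finsupp.toMultiset_zero

lemma toList_eq_singleton_iff (I : Fin d →₀ ℕ) (α : Fin d) :
    (Finsupp.toMultiset I).toList = [α] ↔ I = Finsupp.single α 1 := by
  classical
  rw [Multiset.toList_eq_singleton_iff]
  constructor
  · intro h
    have := congrArg Multiset.toFinsupp h
    rwa [Finsupp.toMultiset_toFinsupp, Multiset.toFinsupp_singleton] at this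
  · rintro rfl
    rw [Finsupp.toMultiset_single, one_nsmul]

lemma pderivL_canon_X (I : Fin d →₀ ℕ) (α : Fin d) :
    pderivL (Finsupp.toMultiset I).toList (X α : MvPolynomial (Fin d) ℂ)
      = if I = 0 then X α else if I = Finsupp.single α 1 then 1 else 0 := by
  classical
  rw [pderivL_X]
  by_cases h0 : I = 0
  · rw [if_pos ((toList_eq_nil_iff I).mpr h0), if_pos h0]
  · rw [if_neg (fun hc => h0 ((toList_eq_nil_iff I).mp hc)), if_neg h0]
    by_cases h1 : I = Finsupp.single α 1
    · rw [if_pos ((toList_eq_singleton_iff I α).mpr h1), if_pos h1]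
    · rw [if_neg (fun hc => h1 ((toList_eq_singleton_iff I α).mp hc)), if_neg h1]

@[simp] lemma Pa_zero (a : Fin d → ℂ) : Pa a 0 = 1 := by
  simp [Pa]

lemma Pa_split (a : Fin d → ℂ) (K : Fin d →₀ ℕ) (α : Fin d) (h : K α ≠ 0) :
    Pa a K = (X α - C (a α)) * Pa a (K - Finsupp.single α 1) := by
  classical
  rw [Pa, Pa]
  simp only [Finsupp.tsub_apply]
  rw [← Finset.mul_prod_erase Finset.univ (fun i => (X i - C (a i)) ^ (K i)) (Finset.mem_univ α),
    ← Finset.mul_prod_erase Finset.univ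
      (fun i => (X i - C (a i)) ^ (K i - Finsupp.single α 1 i)) (Finset.mem_univ α)]
  have h2 : ∀ i ∈ Finset.univ.erase α,
      (X i - C (a i)) ^ (K i - Finsupp.single α 1 i) = (X i - C (a i)) ^ (K i) := by
    intro i hi
    congr 1
    rw [Finsupp.single_apply,
      if_neg (Ne.symm (Finset.ne_of_mem_erase hi)), tsub_zero]
  rw [Finset.prod_congr rfl h2, ← mul_assoc]
  congr 1
  rw [Finsupp.single_eq_same]
  conv_lhs => rw [show K α = (K α - 1) + 1 from (Nat.succ_pred_eq_of_pos (Nat.pos_of_ne_zero h)).symm]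
  rw [pow_succ]
  ring

/-- product of factorials of a multi-index -/
def fa (J : Fin d →₀ ℕ) : ℕ := ∏ i : Fin d, (J i).factorial

lemma fa_cast_ne_zero (J : Fin d →₀ ℕ) : ((fa J : ℕ) : ℂ) ≠ 0 := by
  rw [Nat.cast_ne_zero]
  exact (Finset.prod_pos (fun i _ => Nat.factorial_pos _)).ne'

lemma fa_split (K : Fin d →₀ ℕ) (α : Fin d) (h : K α ≠ 0) :
    fa K = K α * fa (K - Finsupp.single α 1) := by
  rw [fa, fa, prod_factorial_split K α h]
  refine congrArg (K α * ·) ?_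
  exact Finset.prod_congr rfl (fun i _ => by rw [Finsupp.tsub_apply])

lemma eval_pderivL_Pa' (a : Fin d → ℂ) (J' J : Fin d →₀ ℕ) :
    eval a (pderivL (Finsupp.toMultiset J').toList (Pa a J))
      = if J' = J then ((fa J : ℕ) : ℂ) else 0 :=
  eval_pderivL_Pa a J' J

end DitoAux2

namespace DitoAux3
open DitoAux DitoAux2
variable {d : ℕ}

noncomputable def coordCLM (α : Fin d) : (Fin d → ℝ) →L[ℝ] ℂ :=
  Complex.ofRealCLM.comp (ContinuousLinearMap.proj α)

lemma coordCLM_apply (α : Fin d) (x : Fin d → ℝ) : coordCLM α x = ((x α : ℝ) : ℂ) := rfl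

lemma polyEval_C (a : ℂ) : polyEval (C a : MvPolynomial (Fin d) ℂ) = fun _ => a := by
  funext x ; simp [polyEval]

lemma polyEval_add (p q : MvPolynomial (Fin d) ℂ) :
    polyEval (p + q) = fun x => polyEval p x + polyEval q x := by
  funext x ; simp [polyEval]

lemma polyEval_mul (p q : MvPolynomial (Fin d) ℂ) :
    polyEval (p * q) = fun x => polyEval p x * polyEval q x := by
  funext x ; simp [polyEval]

lemma polyEval_X (α : Fin d) : polyEval (X α : MvPolynomial (Fin d) ℂ) = fun x => ((x α : ℝ) : ℂ) := by
  funext x ; simp [polyEval]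

lemma coordFn_eq_polyEval (α : Fin d) : coordFn α = polyEval (X α : MvPolynomial (Fin d) ℂ) := by
  rw [polyEval_X] ; rfl

lemma polyEval_smul (n : ℕ) (p : MvPolynomial (Fin d) ℂ) :
    polyEval (n • p) = fun x => (n : ℂ) * polyEval p x := by
  funext x ; simp [polyEval]

lemma differentiable_polyEval (p : MvPolynomial (Fin d) ℂ) :
    Differentiable ℝ (polyEval p) := by
  induction p using MvPolynomial.induction_on with
  | C a => rw [polyEval_C] ; exact differentiable_const a
  | add p q hp hq => rw [polyEval_add] ; exact hp.add hq
  | mul_X p i hp =>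
    rw [polyEval_mul, polyEval_X]
    exact hp.mul (coordCLM i).differentiable

lemma pd_polyEval (μ : Fin d) (p : MvPolynomial (Fin d) ℂ) :
    pd μ (polyEval p) = polyEval (pderiv μ p) := by
  induction p using MvPolynomial.induction_on with
  | C a =>
    funext x
    rw [pderiv_C, pd, polyEval_C]
    simp [polyEval]
  | add p q hp hq =>
    funext x
    rw [map_add, polyEval_add, pd]
    rw [fderiv_fun_add ((differentiable_polyEval p).differentiableAt)
      ((differentiable_polyEval q).differentiableAt)]
    have : polyEval (pderiv μ p + pderiv μ q) x = polyEval (pderiv μ p) x + polyEval (pderiv μ q) x := by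
      simp [polyEval]
    rw [this, ← hp, ← hq, pd, pd]
    rfl
  | mul_X p i hp =>
    funext x
    rw [pd, polyEval_mul, polyEval_X]
    have hg : (fun x : Fin d → ℝ => ((x i : ℝ) : ℂ)) = ⇑(coordCLM i) := rfl
    rw [fderiv_fun_mul ((differentiable_polyEval p).differentiableAt)
      (by rw [hg] ; exact (coordCLM i).differentiableAt :
        DifferentiableAt ℝ (fun x : Fin d → ℝ => ((x i : ℝ) : ℂ)) x)]
    simp only [ContinuousLinearMap.add_apply, ContinuousLinearMap.smul_apply, smul_eq_mul]
    rw [hg, ContinuousLinearMap.fderiv]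
    rcases eq_or_ne μ i with rfl | hμ
    · have h1 : coordCLM μ (Pi.single μ 1) = 1 := by
        rw [coordCLM_apply]
        norm_num [Pi.single_eq_same]
      rw [h1]
      have h2 : polyEval (pderiv μ (p * X μ)) x
          = polyEval (pderiv μ p) x * ((x μ : ℝ) : ℂ) + polyEval p x := by
        rw [pderiv_mul, pderiv_X, Pi.single_eq_same]
        simp [polyEval]
      rw [h2, ← hp, pd]
      ring
    · have h1 : coordCLM i (Pi.single μ 1) = 0 := by
        rw [coordCLM_apply]
        norm_num [Pi.single_eq_of_ne (Ne.symm hμ)]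
      rw [h1]
      have h2 : polyEval (pderiv μ (p * X i)) x
          = polyEval (pderiv μ p) x * ((x i : ℝ) : ℂ) := by
        rw [pderiv_mul, pderiv_X, Pi.single_eq_of_ne (Ne.symm hμ)]
        simp [polyEval]
      rw [h2, ← hp, pd]
      ring
lemma pds_polyEval (L : List (Fin d)) (p : MvPolynomial (Fin d) ℂ) :
    pds L (polyEval p) = polyEval (pderivL L p) := by
  induction L generalizing p with
  | nil => rfl
  | cons μ L ih =>
    show pd μ (pds L (polyEval p)) = _
    rw [ih, pd_polyEval, pderivL_cons]

lemma pdsM_polyEval (I : Fin d →₀ ℕ) (p : MvPolynomial (Fin d) ℂ) :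
    pdsM I (polyEval p) = polyEval (pderivL (Finsupp.toMultiset I).toList p) :=
  pds_polyEval _ p

lemma contDiff_coord (α : Fin d) :
    ContDiff ℝ (⊤ : ℕ∞) (fun x : Fin d → ℝ => ((x α : ℝ) : ℂ)) := (coordCLM α).contDiff

lemma pdsM_coordFn (I : Fin d →₀ ℕ) (α : Fin d) (x : Fin d → ℝ) :
    pdsM I (coordFn α) x
      = if I = 0 then ((x α : ℝ) : ℂ) else if I = Finsupp.single α 1 then 1 else 0 := by
  classical
  rw [coordFn_eq_polyEval, pdsM_polyEval, pderivL_canon_X]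
  split_ifs with h0 h1 <;> simp [polyEval]

end DitoAux3

namespace DitoAux4
open DitoAux DitoAux2 DitoAux3
variable {d : ℕ} {U : Set (Fin d → ℝ)}

noncomputable def ccFn (φ : BiDiffOpOn d U) (α : Fin d) (J : Fin d →₀ ℕ) :
    (Fin d → ℝ) → ℂ :=
  fun x => φ.coeff (0, J) x * ((x α : ℝ) : ℂ) + φ.coeff (Finsupp.single α 1, J) x

lemma ccFn_support (φ : BiDiffOpOn d U) (α : Fin d) {J : Fin d →₀ ℕ}
    (h : ccFn φ α J ≠ 0) :
    φ.coeff (0, J) ≠ 0 ∨ φ.coeff (Finsupp.single α 1, J) ≠ 0 := by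
  by_contra hc
  push_neg at hc
  exact h (by funext x ; simp [ccFn, hc.1, hc.2])

lemma phi_apply_coord (φ : BiDiffOpOn d U) (α : Fin d) (g : (Fin d → ℝ) → ℂ)
    (x : Fin d → ℝ) :
    φ.apply (coordFn α) g x = ∑ᶠ J, ccFn φ α J x * pdsM J g x := by
  classical
  set S : Finset ((Fin d →₀ ℕ) × (Fin d →₀ ℕ)) := φ.finite.toFinset with hS
  set T : Finset (Fin d →₀ ℕ) := S.image Prod.snd with hT
  have hmemS : ∀ p, p ∈ S ↔ φ.coeff p ≠ 0 := fun p => φ.finite.mem_toFinset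
  set P : Finset ((Fin d →₀ ℕ) × (Fin d →₀ ℕ)) :=
    ({0, Finsupp.single α 1} : Finset (Fin d →₀ ℕ)) ×ˢ T with hP
  set F : (Fin d →₀ ℕ) × (Fin d →₀ ℕ) → ℂ :=
    fun p => φ.coeff p x * pdsM p.1 (coordFn α) x * pdsM p.2 g x with hF
  have hsub : Function.support F ⊆ ↑(S ∪ P) := by
    intro p hp
    simp only [Function.mem_support, hF] at hp
    have hc : φ.coeff p ≠ 0 := by
      intro hzero
      exact hp (by rw [hzero] ; simp)
    exact Finset.mem_coe.mpr (Finset.mem_union_left _ ((hmemS p).mpr hc))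
  have step1 : φ.apply (coordFn α) g x = ∑ p ∈ S ∪ P, F p := by
    simp only [BiDiffOpOn.apply]
    exact finsum_eq_finset_sum_of_support_subset F hsub
  have step2 : ∑ p ∈ S ∪ P, F p = ∑ p ∈ P, F p := by
    refine (Finset.sum_subset Finset.subset_union_right ?_).symm
    intro p hpU hpP
    rcases Finset.mem_union.mp hpU with hpS | hpP'
    · have h2 : p.2 ∈ T := Finset.mem_image.mpr ⟨p, hpS, rfl⟩
      have h1 : p.1 ∉ ({0, Finsupp.single α 1} : Finset (Fin d →₀ ℕ)) := by
        intro h1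
        exact hpP (Finset.mem_product.mpr ⟨h1, h2⟩)
      rw [Finset.mem_insert, Finset.mem_singleton] at h1
      push_neg at h1
      simp only [hF, pdsM_coordFn, if_neg h1.1, if_neg h1.2]
      ring
    · exact absurd hpP' hpP
  have hsne : (Finsupp.single α 1 : Fin d →₀ ℕ) ≠ 0 :=
    fun h => one_ne_zero (Finsupp.single_eq_zero.mp h)
  have hz : (0 : Fin d →₀ ℕ) ∉ ({Finsupp.single α 1} : Finset (Fin d →₀ ℕ)) := by
    rw [Finset.mem_singleton]
    exact fun h => hsne h.symm
  have step3 : ∑ p ∈ P, F p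
      = ∑ J ∈ T, (ccFn φ α J x * pdsM J g x) := by
    rw [hP, Finset.sum_product, Finset.sum_insert hz, Finset.sum_singleton,
      ← Finset.sum_add_distrib]
    refine Finset.sum_congr rfl (fun J _ => ?_)
    have e1 : pdsM (0 : Fin d →₀ ℕ) (coordFn α) x = ((x α : ℝ) : ℂ) := by
      rw [pdsM_coordFn, if_pos rfl]
    have e2 : pdsM (Finsupp.single α 1) (coordFn α) x = 1 := by
      rw [pdsM_coordFn, if_neg hsne, if_pos rfl]
    simp only [hF]
    rw [e1, e2]
    simp only [ccFn]
    ring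
  have hsub2 : Function.support (fun J => ccFn φ α J x * pdsM J g x) ⊆ ↑T := by
    intro J hJ
    simp only [Function.mem_support] at hJ
    have hcc : ccFn φ α J ≠ 0 := by
      intro hzero
      exact hJ (by rw [hzero] ; simp)
    rcases ccFn_support φ α hcc with h | h
    · exact Finset.mem_coe.mpr (Finset.mem_image.mpr ⟨(0, J), (hmemS _).mpr h, rfl⟩)
    · exact Finset.mem_coe.mpr
        (Finset.mem_image.mpr ⟨(Finsupp.single α 1, J), (hmemS _).mpr h, rfl⟩)
  rw [step1, step2, step3, finsum_eq_finset_sum_of_support_subset _ hsub2]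

noncomputable def pick (K : Fin d →₀ ℕ) (h : K ≠ 0) : Fin d :=
  K.support.min' (Finsupp.support_nonempty_iff.mpr h)

lemma pick_pos (K : Fin d →₀ ℕ) (h : K ≠ 0) : K (pick K h) ≠ 0 :=
  Finsupp.mem_support_iff.mp (K.support.min'_mem _)

noncomputable def etaCoeff (φ : BiDiffOpOn d U) (K : Fin d →₀ ℕ) : (Fin d → ℝ) → ℂ :=
  if h : K = 0 then 0
  else fun x => ((K (pick K h) : ℂ))⁻¹ * ccFn φ (pick K h) (K - Finsupp.single (pick K h) 1) x

lemma etaCoeff_finite (φ : BiDiffOpOn d U) : {K | etaCoeff φ K ≠ 0}.Finite := by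
  classical
  have hsub : {K | etaCoeff φ K ≠ 0} ⊆
      ⋃ α : Fin d, (fun J => J + Finsupp.single α 1) '' (Prod.snd '' {p | φ.coeff p ≠ 0}) := by
    intro K hK
    simp only [Set.mem_setOf_eq] at hK
    have hK0 : K ≠ 0 := by
      intro h
      exact hK (by simp [etaCoeff, h])
    have hcc : ccFn φ (pick K hK0) (K - Finsupp.single (pick K hK0) 1) ≠ 0 := by
      intro h
      apply hK
      simp only [etaCoeff, dif_neg hK0]
      funext x
      rw [h]
      simp
    refine Set.mem_iUnion.mpr ⟨pick K hK0, ⟨K - Finsupp.single (pick K hK0) 1, ?_, ?_⟩⟩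
    · rcases ccFn_support φ _ hcc with h | h
      · exact ⟨(0, K - Finsupp.single (pick K hK0) 1), h, rfl⟩
      · exact ⟨(Finsupp.single (pick K hK0) 1, K - Finsupp.single (pick K hK0) 1), h, rfl⟩
    · exact tsub_add_cancel_of_le
        (Finsupp.single_le_iff.mpr (Nat.one_le_iff_ne_zero.mpr (pick_pos K hK0)))
  exact Set.Finite.subset
    (Set.finite_iUnion (fun α => ((φ.finite.image Prod.snd).image _))) hsub

lemma etaCoeff_smooth (φ : BiDiffOpOn d U) (K : Fin d →₀ ℕ) :
    ContDiffOn ℝ (⊤ : ℕ∞) (etaCoeff φ K) U := by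
  rw [etaCoeff]
  split_ifs with h
  · exact contDiffOn_const
  · exact ContDiffOn.mul contDiffOn_const
      (ContDiffOn.add
        (ContDiffOn.mul (φ.smooth _) ((contDiff_coord _).contDiffOn))
        (φ.smooth _))

end DitoAux4
open DitoAux DitoAux2 DitoAux3 DitoAux4 in
/-- Dito's lemma: if `ψ : Pol → C^∞(U)` is ℂ-linear, vanishes on
`1` and on the coordinate functions, and `[ψ, x^α](f) = φ(x^α, f)` for a
bidifferential operator `φ` vanishing on constants, then `ψ` is the restriction
to polynomials of exactly one differential operator `η` on `U`. -/
theorem dito_lemma {d : ℕ} (U : Set (Fin d → ℝ)) (hU : IsOpen U)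
    (ψ : MvPolynomial (Fin d) ℂ →ₗ[ℂ] ((Fin d → ℝ) → ℂ))
    (hψsm : ∀ p, ContDiffOn ℝ (⊤ : ℕ∞) (ψ p) U)
    (hψ1 : ∀ x ∈ U, ψ 1 x = 0)
    (hψX : ∀ α, ∀ x ∈ U, ψ (MvPolynomial.X α) x = 0)
    (φ : BiDiffOpOn d U)
    (hφ1 : ∀ g, ∀ x ∈ U, φ.apply 1 g x = 0)
    (hφ2 : ∀ f, ∀ x ∈ U, φ.apply f 1 x = 0)
    (hcomm : ∀ α p, ∀ x ∈ U,
      ψ (MvPolynomial.X α * p) x - (x α : ℂ) * ψ p x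
        = φ.apply (coordFn α) (polyEval p) x) :
    ∃ η : DiffOpOn d U,
      (∀ p, ∀ x ∈ U, η.apply (polyEval p) x = ψ p x) ∧
      ∀ η' : DiffOpOn d U, (∀ p, ∀ x ∈ U, η'.apply (polyEval p) x = ψ p x) →
        ∀ f, ContDiffOn ℝ (⊤ : ℕ∞) f U → ∀ x ∈ U, η'.apply f x = η.apply f x := by
  classical
  set av : (Fin d → ℝ) → (Fin d → ℂ) := fun x i => ((x i : ℝ) : ℂ) with hav
  -- `ψ` applied to the shifted monomials, computed via the commutator hypothesis
  have keyψ : ∀ x ∈ U, ∀ (K : Fin d →₀ ℕ) (α : Fin d), K α ≠ 0 →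
      ψ (Pa (av x) K) x
        = ccFn φ α (K - Finsupp.single α 1) x
            * ((fa (K - Finsupp.single α 1) : ℕ) : ℂ) := by
    intro x hx K α hα
    have hsplit : Pa (av x) K
        = X α * Pa (av x) (K - Finsupp.single α 1)
          - C (av x α) * Pa (av x) (K - Finsupp.single α 1) := by
      rw [Pa_split (av x) K α hα]
      ring
    have hsmul : C (av x α) * Pa (av x) (K - Finsupp.single α 1)
        = av x α • Pa (av x) (K - Finsupp.single α 1) := by
      rw [MvPolynomial.smul_eq_C_mul]
    have h1 : ψ (Pa (av x) K) x
        = ψ (X α * Pa (av x) (K - Finsupp.single α 1)) x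
          - (x α : ℂ) * ψ (Pa (av x) (K - Finsupp.single α 1)) x := by
      rw [hsplit, hsmul, map_sub, map_smul]
      simp [av]
    rw [h1, hcomm α _ x hx, phi_apply_coord]
    have hterm : ∀ J : Fin d →₀ ℕ, J ≠ K - Finsupp.single α 1 →
        ccFn φ α J x * pdsM J (polyEval (Pa (av x) (K - Finsupp.single α 1))) x = 0 := by
      intro J hJ
      have : pdsM J (polyEval (Pa (av x) (K - Finsupp.single α 1))) x = 0 := by
        rw [pdsM_polyEval]
        show eval (av x) _ = 0
        rw [eval_pderivL_Pa', if_neg hJ]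
      rw [this, mul_zero]
    rw [finsum_eq_single _ (K - Finsupp.single α 1) hterm]
    have : pdsM (K - Finsupp.single α 1)
        (polyEval (Pa (av x) (K - Finsupp.single α 1))) x
          = ((fa (K - Finsupp.single α 1) : ℕ) : ℂ) := by
      rw [pdsM_polyEval]
      show eval (av x) _ = _
      rw [eval_pderivL_Pa', if_pos rfl]
    rw [this]
  -- the coefficients of the candidate operator compute `ψ` on shifted monomials
  have keyCoeff : ∀ x ∈ U, ∀ K : Fin d →₀ ℕ,
      etaCoeff φ K x * ((fa K : ℕ) : ℂ) = ψ (Pa (av x) K) x := by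
    intro x hx K
    rcases eq_or_ne K 0 with rfl | hK0
    · rw [show etaCoeff φ (0 : Fin d →₀ ℕ) = 0 from dif_pos rfl]
      rw [Pa_zero]
      rw [hψ1 x hx]
      simp
    · set α := pick K hK0 with hα
      have hpos : K α ≠ 0 := pick_pos K hK0
      rw [keyψ x hx K α hpos]
      have he : etaCoeff φ K x
          = ((K α : ℂ))⁻¹ * ccFn φ α (K - Finsupp.single α 1) x := by
        rw [etaCoeff, dif_neg hK0]
      have hfa : ((fa K : ℕ) : ℂ)
          = (K α : ℂ) * ((fa (K - Finsupp.single α 1) : ℕ) : ℂ) := by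
        rw [fa_split K α hpos]
        push_cast
        ring
      rw [he, hfa]
      have hKα : (K α : ℂ) ≠ 0 := Nat.cast_ne_zero.mpr hpos
      field_simp
  -- the crucial compatibility identity
  have keyStep : ∀ x ∈ U, ∀ (K : Fin d →₀ ℕ) (α : Fin d), K α ≠ 0 →
      etaCoeff φ K x * (K α : ℂ) = ccFn φ α (K - Finsupp.single α 1) x := by
    intro x hx K α hα
    have h1 := keyCoeff x hx K
    rw [keyψ x hx K α hα] at h1
    have hfa : ((fa K : ℕ) : ℂ)
        = (K α : ℂ) * ((fa (K - Finsupp.single α 1) : ℕ) : ℂ) := by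
      rw [fa_split K α hα]
      push_cast
      ring
    rw [hfa] at h1
    have hfz := fa_cast_ne_zero (K - Finsupp.single α 1)
    have h2 : (etaCoeff φ K x * (K α : ℂ)) * ((fa (K - Finsupp.single α 1) : ℕ) : ℂ)
        = ccFn φ α (K - Finsupp.single α 1) x * ((fa (K - Finsupp.single α 1) : ℕ) : ℂ) := by
      linear_combination h1
    exact mul_right_cancel₀ hfz h2
  -- the candidate differential operator
  set η : DiffOpOn d U := ⟨etaCoeff φ, etaCoeff_finite φ, etaCoeff_smooth φ⟩ with hη
  have hfin : ∀ (x : Fin d → ℝ) (A : (Fin d →₀ ℕ) → ℂ),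
      (Function.support fun K => etaCoeff φ K x * A K).Finite := by
    intro x A
    apply (etaCoeff_finite φ).subset
    intro K hK
    simp only [Function.mem_support] at hK
    exact fun h => hK (by rw [h] ; simp)
  have main : ∀ p, ∀ x ∈ U, DiffOpOn.apply η (polyEval p) x = ψ p x := by
    intro p
    induction p using MvPolynomial.induction_on with
    | C a =>
      intro x hx
      have hz : ∀ K, etaCoeff φ K x * pdsM K (polyEval (MvPolynomial.C a)) x = 0 := by
        intro K
        rcases eq_or_ne K 0 with rfl | hK
        · rw [show etaCoeff φ (0 : Fin d →₀ ℕ) = 0 from dif_pos rfl]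
          simp
        · have hnil : pdsM K (polyEval (MvPolynomial.C a)) x = 0 := by
            rw [pdsM_polyEval, pderivL_C,
              if_neg (fun hc => hK ((toList_eq_nil_iff K).mp hc))]
            simp [polyEval]
          rw [hnil, mul_zero]
      show (∑ᶠ K, etaCoeff φ K x * pdsM K (polyEval (MvPolynomial.C a)) x) = _
      rw [finsum_eq_zero_of_forall_eq_zero hz]
      have hsm : ψ (MvPolynomial.C a) = a • ψ 1 := by
        rw [← map_smul]
        congr 1
        rw [MvPolynomial.smul_eq_C_mul, mul_one]
      rw [hsm]
      simp [hψ1 x hx]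
    | add p q hp hq =>
      intro x hx
      have he : ∀ K, etaCoeff φ K x * pdsM K (polyEval (p + q)) x
          = etaCoeff φ K x * pdsM K (polyEval p) x
            + etaCoeff φ K x * pdsM K (polyEval q) x := by
        intro K
        rw [pdsM_polyEval, pdsM_polyEval, pdsM_polyEval, pderivL_add]
        have h2 : polyEval (pderivL (Finsupp.toMultiset K).toList p
            + pderivL (Finsupp.toMultiset K).toList q) x
            = polyEval (pderivL (Finsupp.toMultiset K).toList p) x
              + polyEval (pderivL (Finsupp.toMultiset K).toList q) x := by
          simp [polyEval]
        rw [h2]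
        ring
      show (∑ᶠ K, etaCoeff φ K x * pdsM K (polyEval (p + q)) x) = _
      rw [finsum_congr he, finsum_add_distrib (hfin x _) (hfin x _), map_add, Pi.add_apply,
        ← hp x hx, ← hq x hx]
      rfl
    | mul_X p α hp =>
      intro x hx
      have hcm : ψ (p * MvPolynomial.X α) x
          = (x α : ℂ) * ψ p x + φ.apply (coordFn α) (polyEval p) x := by
        have hc := hcomm α p x hx
        rw [mul_comm p (MvPolynomial.X α)]
        linear_combination hc
      have he : ∀ K, etaCoeff φ K x * pdsM K (polyEval (p * MvPolynomial.X α)) x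
          = (x α : ℂ) * (etaCoeff φ K x * pdsM K (polyEval p) x)
            + (etaCoeff φ K x * (K α : ℂ))
              * polyEval (pderivL
                  (Finsupp.toMultiset (K - Finsupp.single α 1)).toList p) x := by
        intro K
        rw [pdsM_polyEval, mul_comm p (MvPolynomial.X α), pderivL_canon_X_mul]
        have h2 : polyEval (MvPolynomial.X α * pderivL (Finsupp.toMultiset K).toList p
            + (K α) • pderivL (Finsupp.toMultiset (K - Finsupp.single α 1)).toList p) x
            = (x α : ℂ) * polyEval (pderivL (Finsupp.toMultiset K).toList p) x
              + (K α : ℂ) * polyEval (pderivL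
                  (Finsupp.toMultiset (K - Finsupp.single α 1)).toList p) x := by
          simp [polyEval]
        rw [h2, pdsM_polyEval]
        ring
      have hf1 : (Function.support fun K =>
          (x α : ℂ) * (etaCoeff φ K x * pdsM K (polyEval p) x)).Finite := by
        apply (etaCoeff_finite φ).subset
        intro K hK
        simp only [Function.mem_support] at hK
        exact fun h => hK (by rw [h] ; simp)
      have hf2 : (Function.support fun K =>
          (etaCoeff φ K x * (K α : ℂ))
            * polyEval (pderivL
                (Finsupp.toMultiset (K - Finsupp.single α 1)).toList p) x).Finite := by
        apply (etaCoeff_finite φ).subset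
        intro K hK
        simp only [Function.mem_support] at hK
        exact fun h => hK (by rw [h] ; simp)
      have h3 : (∑ᶠ K, etaCoeff φ K x * pdsM K (polyEval p) x) = ψ p x := hp x hx
      have hre : (∑ᶠ K, (etaCoeff φ K x * (K α : ℂ))
            * polyEval (pderivL
                (Finsupp.toMultiset (K - Finsupp.single α 1)).toList p) x)
          = φ.apply (coordFn α) (polyEval p) x := by
        rw [phi_apply_coord]
        set T : Finset (Fin d →₀ ℕ) := (φ.finite.toFinset).image Prod.snd with hT
        set ES : Finset (Fin d →₀ ℕ) := (etaCoeff_finite φ).toFinset with hES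
        set B : Finset (Fin d →₀ ℕ) :=
          (ES.image (fun K => K - Finsupp.single α 1)) ∪ T with hB
        set G : (Fin d →₀ ℕ) → ℂ := fun K => (etaCoeff φ K x * (K α : ℂ))
          * polyEval (pderivL (Finsupp.toMultiset (K - Finsupp.single α 1)).toList p) x
          with hG
        have hGsub : Function.support G
            ⊆ ↑(B.image (fun J => J + Finsupp.single α 1)) := by
          intro K hK
          simp only [Function.mem_support, hG] at hK
          have h1 : etaCoeff φ K ≠ 0 := fun h => hK (by rw [h] ; simp)
          have h2 : K α ≠ 0 := by
            intro h
            apply hK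
            rw [h]
            simp
          refine Finset.mem_coe.mpr
            (Finset.mem_image.mpr ⟨K - Finsupp.single α 1, ?_, ?_⟩)
          · exact Finset.mem_union_left _ (Finset.mem_image.mpr
              ⟨K, (etaCoeff_finite φ).mem_toFinset.mpr h1, rfl⟩)
          · exact tsub_add_cancel_of_le
              (Finsupp.single_le_iff.mpr (Nat.one_le_iff_ne_zero.mpr h2))
        rw [finsum_eq_finset_sum_of_support_subset G hGsub,
          Finset.sum_image (fun J1 _ J2 _ h => by
            exact add_left_injective (Finsupp.single α 1) h)]
        have hptw : ∀ J ∈ B, G (J + Finsupp.single α 1)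
            = ccFn φ α J x * pdsM J (polyEval p) x := by
          intro J _
          set K' : Fin d →₀ ℕ := J + Finsupp.single α 1 with hK'
          have hα2 : K' α ≠ 0 := by
            rw [hK', Finsupp.add_apply, Finsupp.single_eq_same]
            omega
          have hcc := keyStep x hx K' α hα2
          have hsub' : K' - Finsupp.single α 1 = J := by
            rw [hK']
            exact add_tsub_cancel_right _ _
          rw [hsub'] at hcc
          simp only [hG]
          rw [hsub', hcc, pdsM_polyEval]
        rw [Finset.sum_congr rfl hptw]
        have hsub2 : Function.support (fun J => ccFn φ α J x * pdsM J (polyEval p) x)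
            ⊆ ↑B := by
          intro J hJ
          simp only [Function.mem_support] at hJ
          have hcc : ccFn φ α J ≠ 0 := fun h => hJ (by rw [h] ; simp)
          rcases ccFn_support φ α hcc with h | h
          · exact Finset.mem_coe.mpr (Finset.mem_union_right _
              (Finset.mem_image.mpr ⟨(0, J), φ.finite.mem_toFinset.mpr h, rfl⟩))
          · exact Finset.mem_coe.mpr (Finset.mem_union_right _
              (Finset.mem_image.mpr
                ⟨(Finsupp.single α 1, J), φ.finite.mem_toFinset.mpr h, rfl⟩))
        rw [finsum_eq_finset_sum_of_support_subset _ hsub2]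
      show (∑ᶠ K, etaCoeff φ K x * pdsM K (polyEval (p * MvPolynomial.X α)) x) = _
      rw [finsum_congr he, finsum_add_distrib hf1 hf2, ← mul_finsum _ _,
        h3, hre, hcm]
  refine ⟨η, main, ?_⟩
  intro η' h' f _ x hx
  have hval : ∀ (θ : DiffOpOn d U), (∀ p, ∀ y ∈ U, θ.apply (polyEval p) y = ψ p y) →
      ∀ K₀, θ.coeff K₀ x * ((fa K₀ : ℕ) : ℂ) = ψ (Pa (av x) K₀) x := by
    intro θ hθ K₀
    have h0 := hθ (Pa (av x) K₀) x hx
    simp only [DiffOpOn.apply] at h0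
    have hterm : ∀ K, K ≠ K₀ →
        θ.coeff K x * pdsM K (polyEval (Pa (av x) K₀)) x = 0 := by
      intro K hK
      have hz : pdsM K (polyEval (Pa (av x) K₀)) x = 0 := by
        rw [pdsM_polyEval]
        show MvPolynomial.eval (av x) _ = 0
        rw [eval_pderivL_Pa', if_neg hK]
      rw [hz, mul_zero]
    rw [finsum_eq_single _ K₀ hterm] at h0
    have h2 : pdsM K₀ (polyEval (Pa (av x) K₀)) x = ((fa K₀ : ℕ) : ℂ) := by
      rw [pdsM_polyEval]
      show MvPolynomial.eval (av x) _ = _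
      rw [eval_pderivL_Pa', if_pos rfl]
    rw [h2] at h0
    exact h0
  have huc : ∀ K, η'.coeff K x = etaCoeff φ K x := by
    intro K₀
    have ha := hval η' h' K₀
    have hb := keyCoeff x hx K₀
    exact mul_right_cancel₀ (fa_cast_ne_zero K₀) (ha.trans hb.symm)
  show (∑ᶠ K, η'.coeff K x * pdsM K f x) = ∑ᶠ K, etaCoeff φ K x * pdsM K f x
  exact finsum_congr (fun K => by rw [huc K])
end

section
/- Let A be an associative (not necessarily commutative) ℂ[[ħ]]-algebra and x^1,…,x^d elements with commutators [x^μ, x^ν] = iħ P^{μν}·1 for constant scalars P^{μν}. Then for any element a ∈ A and indices α, α₁,…,αᵣ: (1/(r+1)!) Σ_{σ ∈ S_{r+1}} x^{σ(α)} x^{σ(α₁)} ⋯ x^{σ(αᵣ)} equals x^α · s(α₁,…,αᵣ) − (iħ/2) Σ_{s=1}^{r} P^{α αₛ} s(α₁,…,α̂ₛ,…,αᵣ), where s(β₁,…,βₖ) = (1/k!) Σ_{σ ∈ S_k} x^{σ(β₁)} ⋯ x^{σ(βₖ)} denotes the symmetrized product and α̂ₛ means αₛ is omitted. -/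
noncomputable def insPerm {n : ℕ} (j s : Fin (n+1)) (ρ : Equiv.Perm (Fin n)) :
    Equiv.Perm (Fin (n+1)) :=
  (finSuccEquiv' j).trans ((Equiv.optionCongr ρ).trans (finSuccEquiv' s).symm)

lemma insPerm_at {n : ℕ} (j s : Fin (n+1)) (ρ : Equiv.Perm (Fin n)) : insPerm j s ρ j = s := by
  simp [insPerm, finSuccEquiv'_at, finSuccEquiv'_symm_none]

lemma insPerm_succAbove {n : ℕ} (j s : Fin (n+1)) (ρ : Equiv.Perm (Fin n)) (i : Fin n) :
    insPerm j s ρ (j.succAbove i) = s.succAbove (ρ i) := by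
  simp [insPerm, finSuccEquiv'_succAbove, finSuccEquiv'_symm_some]

lemma insPerm_bij_card {n : ℕ} :
    Fintype.card (Fin (n+1) × Equiv.Perm (Fin n)) = Fintype.card (Equiv.Perm (Fin (n+1))) := by
  simp [Fintype.card_perm, Nat.factorial_succ]

lemma insPerm_bijective_right {n : ℕ} (j : Fin (n+1)) :
    Function.Bijective (fun p : Fin (n+1) × Equiv.Perm (Fin n) => insPerm j p.1 p.2) := by
  rw [Fintype.bijective_iff_injective_and_card]
  refine ⟨?_, insPerm_bij_card⟩
  rintro ⟨s, ρ⟩ ⟨s', ρ'⟩ h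
  simp only at h
  have hs : s = s' := by
    have := congrArg (fun σ : Equiv.Perm (Fin (n+1)) => σ j) h
    simpa [insPerm_at] using this
  subst hs
  have hρ : ρ = ρ' := by
    ext i
    have := congrArg (fun σ : Equiv.Perm (Fin (n+1)) => σ (j.succAbove i)) h
    simp only [insPerm_succAbove] at this
    exact congrArg Fin.val (Fin.succAbove_right_injective this)
  simp [hρ]

lemma insPerm_bijective_left {n : ℕ} (s : Fin (n+1)) :
    Function.Bijective (fun p : Fin (n+1) × Equiv.Perm (Fin n) => insPerm p.1 s p.2) := by
  rw [Fintype.bijective_iff_injective_and_card]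
  refine ⟨?_, insPerm_bij_card⟩
  rintro ⟨j, ρ⟩ ⟨j', ρ'⟩ h
  simp only at h
  have hj : j = j' := by
    have h1 : insPerm j s ρ j = insPerm j' s ρ' j' := by rw [insPerm_at, insPerm_at]
    rw [h] at h1
    exact (insPerm j' s ρ').injective h1
  subst hj
  have hρ : ρ = ρ' := by
    ext i
    have := congrArg (fun σ : Equiv.Perm (Fin (n+1)) => σ (j.succAbove i)) h
    simp only [insPerm_succAbove] at this
    exact congrArg Fin.val (Fin.succAbove_right_injective this)
  simp [hρ]

lemma ofFn_insPerm {β : Type*} {n : ℕ} (g : Fin (n+1) → β) (j s : Fin (n+1))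
    (ρ : Equiv.Perm (Fin n)) :
    (List.ofFn fun i => g (insPerm j s ρ i)) =
      (List.ofFn fun i => g (s.succAbove (ρ i))).insertIdx j (g s) := by
  have hj : (j : ℕ) ≤ n := Nat.lt_succ_iff.mp j.isLt
  apply List.ext_getElem
  · have h' : (j:ℕ) ≤ (List.ofFn fun i => g (s.succAbove (ρ i))).length := by simpa using hj
    simp [List.length_insertIdx_of_le_length h']
  · intro k h1 h2
    simp only [List.length_ofFn] at h1
    rw [List.getElem_ofFn]
    rcases lt_trichotomy k (j:ℕ) with hk | hk | hk
    · have hkn : k < n := lt_of_lt_of_le hk hj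
      rw [List.getElem_insertIdx_of_lt hk]
      rw [List.getElem_ofFn]
      have he : (⟨k, h1⟩ : Fin (n+1)) = j.succAbove ⟨k, hkn⟩ := by
        rw [Fin.succAbove_of_castSucc_lt]
        · rfl
        · simpa [Fin.lt_iff_val_lt_val] using hk
      rw [he, insPerm_succAbove]
    · subst hk
      rw [List.getElem_insertIdx_self]
      have he : (⟨(j:ℕ), h1⟩ : Fin (n+1)) = j := Fin.ext rfl
      rw [he, insPerm_at]
    · obtain ⟨m, rfl⟩ : ∃ m, k = (j:ℕ) + m + 1 := ⟨k - j - 1, by omega⟩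
      have hkn : (j:ℕ) + m < n := by omega
      rw [List.getElem_insertIdx_add_succ _ _ _ _ (by simpa using hkn)]
      rw [List.getElem_ofFn]
      have he : (⟨(j:ℕ)+m+1, h1⟩ : Fin (n+1)) = j.succAbove ⟨(j:ℕ)+m, hkn⟩ := by
        rw [Fin.succAbove_of_le_castSucc]
        · rfl
        · simp [Fin.le_iff_val_le_val]
      rw [he, insPerm_succAbove]

lemma insertIdx_prod {A : Type*} [Ring A] [Algebra ℂ A] (h y : A)
    (hc : ∀ a : A, h * a = a * h) :
    ∀ (j : ℕ) (L : List A) (c : ℕ → ℂ), j ≤ L.length →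
    (∀ m (hm : m < L.length), y * L[m] - L[m] * y = c m • h) →
    (L.insertIdx j y).prod =
      y * L.prod - ∑ m ∈ Finset.range j, c m • (h * (L.eraseIdx m).prod) := by
  intro j
  induction j with
  | zero => intro L c _ _; simp
  | succ j ih =>
    intro L c hj hL
    match L with
    | [] => simp at hj
    | a :: L' =>
      rw [List.insertIdx_succ_cons, List.prod_cons,
        ih L' (fun m => c (m+1)) (by simpa using hj)
          (fun m hm => hL (m+1) (by simpa using hm))]
      have ha : a * y = y * a - c 0 • h := by
        have h0 := hL 0 (by simp)
        simp only [List.getElem_cons_zero] at h0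
        rw [← h0]; abel
      rw [Finset.sum_range_succ']
      simp only [List.prod_cons, List.eraseIdx_cons_succ, List.eraseIdx_cons_zero]
      rw [mul_sub, ← mul_assoc, ha, sub_mul, smul_mul_assoc, Finset.mul_sum]
      have hterm : ∀ m ∈ Finset.range j,
          a * (c (m+1) • (h * (L'.eraseIdx m).prod)) =
            c (m+1) • (h * (a :: L'.eraseIdx m).prod) := by
        intro m _
        rw [mul_smul_comm, ← mul_assoc, ← hc a, mul_assoc, List.prod_cons]
      rw [Finset.sum_congr rfl hterm, mul_assoc]
      abel



/-- The symmetrized product `s(β₁,…,βₖ) = (1/k!) Σ_{σ ∈ S_k} x^{σ(β₁)}⋯x^{σ(βₖ)}`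
of noncommuting elements. -/
noncomputable def symProd {A : Type*} [Ring A] [Algebra ℂ A] {d k : ℕ}
    (x : Fin d → A) (β : Fin k → Fin d) : A :=
  (k.factorial : ℂ)⁻¹ • ∑ σ : Equiv.Perm (Fin k), (List.ofFn fun i => x (β (σ i))).prod

/-- in an associative ℂ[[ħ]]-algebra with `[x^μ, x^ν] = iħ P^{μν}`,
`(1/(r+1)!) Σ_{σ∈S_{r+1}} x^{σ(α)} x^{σ(α₁)}⋯x^{σ(αᵣ)}
 = x^α s(α₁,…,αᵣ) − (iħ/2) Σ_s P^{α αₛ} s(α₁,…,α̂ₛ,…,αᵣ)`. -/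
theorem symmetrized_product_commutation {A : Type*} [Ring A] [Algebra ℂ A]
    {d r : ℕ} (hbar : A) (hcentral : ∀ a : A, hbar * a = a * hbar)
    (P : Fin d → Fin d → ℂ) (hP : ∀ μ ν, P μ ν = -P ν μ)
    (x : Fin d → A)
    (hcomm : ∀ μ ν, x μ * x ν - x ν * x μ = (Complex.I * P μ ν) • hbar)
    (α₀ : Fin d) (αs : Fin (r + 1) → Fin d) :
    symProd x (Fin.cons α₀ αs) =
      x α₀ * symProd x αs -
        (Complex.I / 2) • ∑ s : Fin (r + 1),
          P α₀ (αs s) • (hbar * symProd x (αs ∘ s.succAbove)) := by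
  classical
  set I := Complex.I with hI
  -- basic objects
  set w : Equiv.Perm (Fin (r+1)) → List A := fun τ => List.ofFn fun i => x (αs (τ i)) with hw
  set V : Fin (r+1) → A := fun s =>
    ∑ ρ : Equiv.Perm (Fin r), (List.ofFn fun i => x (αs (s.succAbove (ρ i)))).prod with hV
  set U : A := ∑ s : Fin (r+1), P α₀ (αs s) • (hbar * V s) with hU
  set M : A := x α₀ * ∑ τ : Equiv.Perm (Fin (r+1)), (w τ).prod with hM
  set c : Equiv.Perm (Fin (r+1)) → ℕ → ℂ := fun τ m =>
    if hm : m < r+1 then I * P α₀ (αs (τ ⟨m, hm⟩)) else 0 with hc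
  -- each word with x α₀ inserted at position j
  have hword : ∀ (j : Fin (r+1+1)) (τ : Equiv.Perm (Fin (r+1))),
      (List.ofFn fun i => x ((Fin.cons α₀ αs : Fin (r+1+1) → Fin d) (insPerm j 0 τ i))).prod
        = x α₀ * (w τ).prod -
          ∑ m ∈ Finset.range (j:ℕ), c τ m • (hbar * ((w τ).eraseIdx m).prod) := by
    intro j τ
    rw [ofFn_insPerm (fun i => x ((Fin.cons α₀ αs : Fin (r+1+1) → Fin d) i)) j 0 τ]
    simp only [Fin.succAbove_zero, Fin.cons_succ, Fin.cons_zero]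
    refine insertIdx_prod hbar (x α₀) hcentral (j:ℕ) _ (c τ) (by simpa using Nat.lt_succ_iff.mp j.isLt) ?_
    intro m hm
    have hm' : m < r + 1 := by simpa using hm
    rw [List.getElem_ofFn, hcomm]
    simp only [hc, dif_pos hm']
  -- step C : the τ-sum of correction terms is independent of m
  have hC : ∀ (m : ℕ), m < r+1 →
      ∑ τ : Equiv.Perm (Fin (r+1)), c τ m • (hbar * ((w τ).eraseIdx m).prod) = I • U := by
    intro m hm
    have hbij := insPerm_bijective_right (n := r) ⟨m, hm⟩
    rw [← Fintype.sum_bijective _ hbij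
      (fun p : Fin (r+1) × Equiv.Perm (Fin r) =>
        c (insPerm ⟨m, hm⟩ p.1 p.2) m • (hbar * ((w (insPerm ⟨m, hm⟩ p.1 p.2)).eraseIdx m).prod))
      _ (fun p => rfl)]
    have hterm : ∀ (s : Fin (r+1)) (ρ : Equiv.Perm (Fin r)),
        c (insPerm ⟨m, hm⟩ s ρ) m • (hbar * ((w (insPerm ⟨m, hm⟩ s ρ)).eraseIdx m).prod)
          = (I * P α₀ (αs s)) •
              (hbar * (List.ofFn fun i => x (αs (s.succAbove (ρ i)))).prod) := by
      intro s ρ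
      have h1 : c (insPerm ⟨m, hm⟩ s ρ) m = I * P α₀ (αs s) := by
        simp only [hc, dif_pos hm, insPerm_at]
      have h2 : (w (insPerm ⟨m, hm⟩ s ρ)).eraseIdx m
          = List.ofFn fun i => x (αs (s.succAbove (ρ i))) := by
        show (List.ofFn fun i => x (αs (insPerm ⟨m, hm⟩ s ρ i))).eraseIdx m = _
        rw [ofFn_insPerm (fun i => x (αs i)) ⟨m, hm⟩ s ρ]
        exact List.eraseIdx_insertIdx_self _
      rw [h1, h2]
    rw [Fintype.sum_prod_type]
    simp only [hterm]
    rw [hU, Finset.smul_sum]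
    refine Finset.sum_congr rfl fun s _ => ?_
    rw [← Finset.smul_sum, ← Finset.mul_sum, mul_smul]
  -- Step A : reindex the big sum
  have hA : ∑ σ : Equiv.Perm (Fin (r+1+1)), (List.ofFn fun i => x ((Fin.cons α₀ αs : Fin (r+1+1) → Fin d) (σ i))).prod
      = (r+1+1) • M - (∑ j : Fin (r+1+1), (j:ℕ)) • (I • U) := by
    rw [← Fintype.sum_bijective _ (insPerm_bijective_left (n := r+1) 0)
      (fun p : Fin (r+1+1) × Equiv.Perm (Fin (r+1)) =>
        (List.ofFn fun i => x ((Fin.cons α₀ αs : Fin (r+1+1) → Fin d) (insPerm p.1 0 p.2 i))).prod)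
      _ (fun p => rfl)]
    rw [Fintype.sum_prod_type]
    simp only [hword]
    have hinner : ∀ j : Fin (r+1+1),
        ∑ τ : Equiv.Perm (Fin (r+1)),
          (x α₀ * (w τ).prod - ∑ m ∈ Finset.range (j:ℕ), c τ m • (hbar * ((w τ).eraseIdx m).prod))
        = M - (j:ℕ) • (Complex.I • U) := by
      intro j
      rw [Finset.sum_sub_distrib, ← Finset.mul_sum, ← hM]
      congr 1
      rw [Finset.sum_comm]
      have hcongr : ∀ m ∈ Finset.range (j:ℕ),
          ∑ τ : Equiv.Perm (Fin (r+1)), c τ m • (hbar * ((w τ).eraseIdx m).prod)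
            = Complex.I • U := by
        intro m hmr
        exact hC m (lt_of_lt_of_le (Finset.mem_range.mp hmr) (Nat.lt_succ_iff.mp j.isLt))
      rw [Finset.sum_congr rfl hcongr, Finset.sum_const, Finset.card_range]
    rw [Finset.sum_congr rfl (fun j _ => hinner j), Finset.sum_sub_distrib, Finset.sum_const,
      Finset.card_univ, Fintype.card_fin, ← Finset.sum_smul]
  -- endgame
  simp only [symProd]
  rw [hA]
  have hR1 : x α₀ * (((r+1).factorial:ℂ)⁻¹ •
      ∑ τ : Equiv.Perm (Fin (r+1)), (List.ofFn fun i => x (αs (τ i))).prod)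
      = ((r+1).factorial:ℂ)⁻¹ • M := by
    rw [mul_smul_comm, hM]
  rw [hR1]
  have hR2 : ∀ s : Fin (r+1),
      P α₀ (αs s) • (hbar * ((r.factorial:ℂ)⁻¹ •
        ∑ ρ : Equiv.Perm (Fin r), (List.ofFn fun i => x ((αs ∘ s.succAbove) (ρ i))).prod))
      = (r.factorial:ℂ)⁻¹ • (P α₀ (αs s) • (hbar * V s)) := by
    intro s
    rw [mul_smul_comm, smul_comm, hV]
    simp only [Function.comp]
  rw [Finset.sum_congr rfl (fun s _ => hR2 s), ← Finset.smul_sum, ← hU]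
  -- now pure scalar algebra
  have hN : (((∑ j : Fin (r+1+1), (j:ℕ) : ℕ)) : ℂ) * 2 = (r+1+1) * (r+1) := by
    have h2 := Finset.sum_range_id_mul_two (r+1+1)
    rw [Fin.sum_univ_eq_sum_range (fun i => i) (r+1+1)]
    have h3 : (∑ i ∈ Finset.range (r+1+1), i) * 2 = (r+1+1) * (r+1) := by simpa using h2
    exact_mod_cast h3
  have hfac2 : (((r+1+1).factorial : ℕ) : ℂ) = ((r:ℂ)+1+1) * (((r+1).factorial : ℕ) : ℂ) := by
    rw [Nat.factorial_succ (r+1)]; push_cast; ring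
  have hfac1 : (((r+1).factorial : ℕ) : ℂ) = ((r:ℂ)+1) * ((r.factorial : ℕ) : ℂ) := by
    rw [Nat.factorial_succ r]; push_cast; ring
  have hf0 : ((r.factorial : ℕ) : ℂ) ≠ 0 := Nat.cast_ne_zero.mpr r.factorial_ne_zero
  rw [show ((r+1+1) • M : A) = (((r+1+1 : ℕ)) : ℂ) • M from (Nat.cast_smul_eq_nsmul ℂ _ M).symm,
    show ((∑ j : Fin (r+1+1), (j:ℕ)) • (Complex.I • U) : A)
      = (((∑ j : Fin (r+1+1), (j:ℕ) : ℕ)) : ℂ) • (Complex.I • U)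
      from (Nat.cast_smul_eq_nsmul ℂ _ _).symm]
  have hr2 : ((r:ℂ)+1+1) ≠ 0 := by exact_mod_cast Nat.succ_ne_zero (r+1)
  have hr1 : ((r:ℂ)+1) ≠ 0 := by exact_mod_cast Nat.succ_ne_zero r
  have hf1 : (((r+1).factorial : ℕ) : ℂ) ≠ 0 := Nat.cast_ne_zero.mpr (r+1).factorial_ne_zero
  match_scalars
  · rw [hfac2]
    push_cast
    field_simp
  · rw [hfac2, hfac1]
    push_cast
    field_simp
    simp only [hI]
    push_cast at hN
    linear_combination (-Complex.I) * hN
end
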